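/- Let X̃, X be metric spaces, p : X̃ → X a surjective map, and Γ a group acting on X̃ by isometries with p(γ·z) = p(z) for all γ, z, such that d_X(p(z), p(w)) = inf_{γ ∈ Γ} d_{X̃}(z, γ·w) for all z, w ∈ X̃. Let Y be a Banach space, X' ⊆ X, and F : X' → (nonempty compact convex subsets of Y) with F(x) convex and compact for each x. Suppose f : p⁻¹(X') → Y is a c-Lipschitz map with f(z) ∈ F(p(z)) for all z ∈ p⁻¹(X'). Define G(x) to be the closed convex hull of f(p⁻¹(x)). Then G(x) ⊆ F(x) for all x ∈ X', and d_H(G(x), G(y)) ≤ c·d_X(x, y) for all x, y ∈ X'. -/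

import Mathlib

/-!
Since `p` is constant on `Γ`-orbits and `d(p z, p w)` is the infimum of `d(z, γ • w)`,
every point `f z` of the fibre image over `x` is within `c · d(x, y) + ε` of some `f (γ • w)`
in the fibre image over `y`. So the fibre images are `c · d(x, y)`-close in Hausdorff distance,
and passing to closed convex hulls does not increase Hausdorff distance, because closed
thickenings of convex sets are closed and convex.
-/

open Metric Set

section ClosedConvexHull

variable {E : Type*} [NormedAddCommGroup E] [NormedSpace ℝ E]

theorem infEDist_le_hausdorffEDist_of_mem_closedConvexHull {s t : Set E} {x : E}
    (hx : x ∈ closedConvexHull ℝ s) :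
    infEDist x (closedConvexHull ℝ t) ≤ hausdorffEDist s t := by
  obtain h | h := eq_or_ne (hausdorffEDist s t) ⊤
  · simp [h]
  rw [← ENNReal.ofReal_toReal h, ← mem_cthickening_iff]
  refine closedConvexHull_min (fun y hy => ?_) (convex_closedConvexHull.cthickening _)
    isClosed_cthickening hx
  rw [mem_cthickening_iff, ENNReal.ofReal_toReal h]
  exact (infEDist_anti subset_closedConvexHull).trans (infEDist_le_hausdorffEDist_of_mem hy)

theorem hausdorffEDist_closedConvexHull_le (s t : Set E) :
    hausdorffEDist (closedConvexHull ℝ s) (closedConvexHull ℝ t) ≤ hausdorffEDist s t :=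
  hausdorffEDist_le_of_infEDist (fun _ hx => infEDist_le_hausdorffEDist_of_mem_closedConvexHull hx)
    fun _ hx => hausdorffEDist_comm (s := s) ▸ infEDist_le_hausdorffEDist_of_mem_closedConvexHull hx

end ClosedConvexHull

section Fibers

variable {Xt X Y Γ : Type*} [PseudoMetricSpace Xt] [PseudoMetricSpace X] [PseudoMetricSpace Y]
  [SMul Γ Xt] [Nonempty Γ] {p : Xt → X} {X' : Set X} {f : Xt → Y} {c : ℝ}

theorem infEDist_image_fiber_le (hdeck : ∀ (γ : Γ) (z : Xt), p (γ • z) = p z)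
    (hdist : ∀ z w : Xt, dist (p z) (p w) = ⨅ γ : Γ, dist z (γ • w)) (hc : 0 ≤ c)
    (hf : ∀ z ∈ p ⁻¹' X', ∀ w ∈ p ⁻¹' X', dist (f z) (f w) ≤ c * dist z w)
    {z w : Xt} (hz : p z ∈ X') (hw : p w ∈ X') :
    infEDist (f z) (f '' (p ⁻¹' {p w})) ≤ ENNReal.ofReal (c * dist (p z) (p w)) := by
  have h_orbit (γ : Γ) :
      infEDist (f z) (f '' (p ⁻¹' {p w})) ≤ ENNReal.ofReal (c * dist z (γ • w)) := by
    have hγw : p (γ • w) = p w := hdeck γ w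
    calc infEDist (f z) (f '' (p ⁻¹' {p w}))
        ≤ edist (f z) (f (γ • w)) := infEDist_le_edist_of_mem (mem_image_of_mem f hγw)
      _ ≤ ENNReal.ofReal (c * dist z (γ • w)) := by
        rw [edist_dist]
        exact ENNReal.ofReal_le_ofReal (hf z hz _ (by rwa [mem_preimage, hγw]))
  rw [hdist, Real.mul_iInf_of_nonneg hc, ENNReal.ofReal_iInf]
  exact le_iInf h_orbit

theorem hausdorffEDist_image_fiber_le (hp : Function.Surjective p)
    (hdeck : ∀ (γ : Γ) (z : Xt), p (γ • z) = p z)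
    (hdist : ∀ z w : Xt, dist (p z) (p w) = ⨅ γ : Γ, dist z (γ • w)) (hc : 0 ≤ c)
    (hf : ∀ z ∈ p ⁻¹' X', ∀ w ∈ p ⁻¹' X', dist (f z) (f w) ≤ c * dist z w)
    {x y : X} (hx : x ∈ X') (hy : y ∈ X') :
    hausdorffEDist (f '' (p ⁻¹' {x})) (f '' (p ⁻¹' {y})) ≤ ENNReal.ofReal (c * dist x y) := by
  refine hausdorffEDist_le_of_infEDist ?_ ?_
  · rintro _ ⟨z, rfl : p z = x, rfl⟩
    obtain ⟨w, rfl⟩ := hp y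
    exact infEDist_image_fiber_le hdeck hdist hc hf hx hy
  · rintro _ ⟨w, rfl : p w = y, rfl⟩
    obtain ⟨z, rfl⟩ := hp x
    rw [dist_comm]
    exact infEDist_image_fiber_le hdeck hdist hc hf hy hx

end Fibers

theorem stmt_5_general {Xt X Y : Type*} [MetricSpace Xt] [MetricSpace X]
    [NormedAddCommGroup Y] [NormedSpace ℝ Y]
    (p : Xt → X) (hp : Function.Surjective p)
    (Γ : Type*) [Group Γ] [MulAction Γ Xt]
    (hdeck : ∀ (γ : Γ) (z : Xt), p (γ • z) = p z)
    (hdist : ∀ z w : Xt, dist (p z) (p w) = ⨅ γ : Γ, dist z (γ • w))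
    (X' : Set X) (F : X → Set Y)
    (hF : ∀ x ∈ X', (F x).Nonempty ∧ IsCompact (F x) ∧ Convex ℝ (F x))
    (f : Xt → Y) (c : ℝ) (hc : 0 ≤ c)
    (hfLip : ∀ z ∈ p ⁻¹' X', ∀ w ∈ p ⁻¹' X', ‖f z - f w‖ ≤ c * dist z w)
    (hfsel : ∀ z ∈ p ⁻¹' X', f z ∈ F (p z))
    (G : X → Set Y) (hG : ∀ x, G x = closure (convexHull ℝ (f '' (p ⁻¹' {x})))) :
    (∀ x ∈ X', G x ⊆ F x) ∧
      (∀ x ∈ X', ∀ y ∈ X', Metric.hausdorffDist (G x) (G y) ≤ c * dist x y) := by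
  have hG' (x : X) : G x = closedConvexHull ℝ (f '' (p ⁻¹' {x})) := by
    rw [hG, closedConvexHull_eq_closure_convexHull]
  refine ⟨fun x hx => ?_, fun x hx y hy => ?_⟩
  · obtain ⟨-, hcompact, hconvex⟩ := hF x hx
    rw [hG']
    refine closedConvexHull_min ?_ hconvex hcompact.isClosed
    rintro _ ⟨z, rfl : p z = x, rfl⟩
    exact hfsel z hx
  · have hf : ∀ z ∈ p ⁻¹' X', ∀ w ∈ p ⁻¹' X', dist (f z) (f w) ≤ c * dist z w := by
      simpa only [dist_eq_norm] using hfLip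
    rw [hausdorffDist, hG', hG']
    exact ENNReal.toReal_le_of_le_ofReal (by positivity)
      ((hausdorffEDist_closedConvexHull_le _ _).trans
        (hausdorffEDist_image_fiber_le hp hdeck hdist hc hf hx hy))

/-- Proposition 2.1: given `p : X̃ → X` surjective with an isometric group action of `Γ`
satisfying `p (γ • z) = p z` and `d(p z, p w) = ⨅ γ, d(z, γ • w)`, a Banach space `Y`,
a set-valued map `F` into nonempty compact convex subsets of `Y` on `X' ⊆ X`, and a
`c`-Lipschitz selection `f` of the pullback `F ∘ p` on `p ⁻¹' X'`, the map
`G x := closed convex hull of f(p⁻¹(x))` satisfies `G x ⊆ F x` and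
`d_H(G x, G y) ≤ c * d(x, y)` on `X'`. -/
theorem stmt_5 {Xt X Y : Type*} [MetricSpace Xt] [MetricSpace X]
    [NormedAddCommGroup Y] [NormedSpace ℝ Y] [CompleteSpace Y]
    (p : Xt → X) (hp : Function.Surjective p)
    (Γ : Type*) [Group Γ] [MulAction Γ Xt]
    (hiso : ∀ γ : Γ, Isometry (fun z : Xt => γ • z))
    (hdeck : ∀ (γ : Γ) (z : Xt), p (γ • z) = p z)
    (hdist : ∀ z w : Xt, dist (p z) (p w) = ⨅ γ : Γ, dist z (γ • w))
    (X' : Set X) (F : X → Set Y)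
    (hF : ∀ x ∈ X', (F x).Nonempty ∧ IsCompact (F x) ∧ Convex ℝ (F x))
    (f : Xt → Y) (c : ℝ) (hc : 0 ≤ c)
    (hfLip : ∀ z ∈ p ⁻¹' X', ∀ w ∈ p ⁻¹' X', ‖f z - f w‖ ≤ c * dist z w)
    (hfsel : ∀ z ∈ p ⁻¹' X', f z ∈ F (p z))
    (G : X → Set Y) (hG : ∀ x, G x = closure (convexHull ℝ (f '' (p ⁻¹' {x})))) :
    (∀ x ∈ X', G x ⊆ F x) ∧
      (∀ x ∈ X', ∀ y ∈ X', Metric.hausdorffDist (G x) (G y) ≤ c * dist x y) :=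
  stmt_5_general p hp Γ hdeck hdist X' F hF f c hc hfLip hfsel G hG
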